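/- Let T₁ be the standard Young tableau of shape (3,2) with first row {1,2,3} and second row {4,5}, and let S be the single-row standard tableau with entries 1,2,3 (so Y_S = (1/3!)·∑_{σ ∈ S₃} σ is the full symmetrizer on {1,2,3}). Then in ℂ[S₅] the Hermitian Young operator of T₁ satisfies Θ_{T₁} = ι₃(Y_S) · Y_{T₁} · ι₃(Y_S), where ι₃: ℂ[S₃] → ℂ[S₅] is the algebra embedding induced by the inclusion S₃ ↪ S₅ fixing 4 and 5; i.e., in this case sandwiching with ι(Θ_{T₁'}) in the recursive definition may be replaced by sandwiching with the symmetrizer over the first row. -/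

import Mathlib

/-!
Letters are `0, …, n - 1` in the code, so `swap 0 3` is the paper's `(1 4)`. Write `Y = Y_{T₁}`,
and `P₃`, `P₄` for the sums over the copies of `S₃`, `S₄` in `S₅` fixing the letters above 3,
resp. 4. Unwinding the recursion, `Θ_{T₁''}` is the average over `S₃`, and
`ι(Θ_{T₁'}) = P₃ (1 - (1 4)) P₃ / 48`.

The row group of `T₁` contains `S₃`, so `P₃ Y = 6 Y`. Its column antisymmetrizer is
`(1 - (1 4)) (1 - (2 5))`, and for every `σ` one of the two column transpositions is conjugated by
`σ` into `S₄`; hence `P₄ Y = 0`, while `Y P₄ = 0` because `(1 4) ∈ S₄`. The right cosets of `S₃`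
in `S₄` are represented by `1, (1 4), (2 4), (3 4)`, and the last three are conjugate under `S₃`,
so these identities become `P₃ (1 4) Y = -2 Y` and `Y P₃ (1 4) P₃ = -2 Y P₃`. Therefore
`ι(Θ_{T₁'}) Y = Y` and `Y ι(Θ_{T₁'}) = Y P₃ / 6`, which gives `Θ_{T₁} = (P₃ / 6) Y (P₃ / 6)`.
-/

open scoped Classical

/-- A standard Young tableau with `n` boxes: the boxes of a Young diagram are filled
bijectively with the numbers `1, …, n`, increasing along each row and down each column.
The entry function is `0` outside the diagram, making the representation canonical. -/
structure SYT (n : ℕ) where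
  shape : YoungDiagram
  entry : ℕ × ℕ → ℕ
  zero_outside : ∀ c : ℕ × ℕ, c ∉ shape.cells → entry c = 0
  bijOn : Set.BijOn entry (shape.cells : Set (ℕ × ℕ)) (Set.Icc 1 n)
  row_lt : ∀ i j₁ j₂ : ℕ, j₁ < j₂ → (i, j₂) ∈ shape.cells → entry (i, j₁) < entry (i, j₂)
  col_lt : ∀ i₁ i₂ j : ℕ, i₁ < i₂ → (i₂, j) ∈ shape.cells → entry (i₁, j) < entry (i₂, j)

namespace SYT

/-- The row index of the box of `T` containing the number `x + 1`. -/
def rowOf {n : ℕ} (T : SYT n) (x : Fin n) : ℕ :=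
  (T.shape.cells.filter fun c => T.entry c = (x : ℕ) + 1).sup Prod.fst

/-- The column index of the box of `T` containing the number `x + 1`. -/
def colOf {n : ℕ} (T : SYT n) (x : Fin n) : ℕ :=
  (T.shape.cells.filter fun c => T.entry c = (x : ℕ) + 1).sup Prod.snd

/-- A permutation is horizontal for `T` (i.e. belongs to the row group `R(T)`)
if it preserves the set of numbers in each row of `T`. -/
def IsHorizontal {n : ℕ} (T : SYT n) (σ : Equiv.Perm (Fin n)) : Prop :=
  ∀ x, T.rowOf (σ x) = T.rowOf x

/-- A permutation is vertical for `T` (i.e. belongs to the column group `C(T)`)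
if it preserves the set of numbers in each column of `T`. -/
def IsVertical {n : ℕ} (T : SYT n) (σ : Equiv.Perm (Fin n)) : Prop :=
  ∀ x, T.colOf (σ x) = T.colOf x

/-- The row symmetrizer `s_T = ∑_{h ∈ R(T)} h` in `ℂ[S_n]`. -/
noncomputable def rowSym {n : ℕ} (T : SYT n) : MonoidAlgebra ℂ (Equiv.Perm (Fin n)) :=
  ∑ σ ∈ Finset.univ.filter (fun σ => T.IsHorizontal σ),
    MonoidAlgebra.of ℂ (Equiv.Perm (Fin n)) σ

/-- The column antisymmetrizer `a_T = ∑_{v ∈ C(T)} sgn(v)·v` in `ℂ[S_n]`. -/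
noncomputable def colAntisym {n : ℕ} (T : SYT n) : MonoidAlgebra ℂ (Equiv.Perm (Fin n)) :=
  ∑ σ ∈ Finset.univ.filter (fun σ => T.IsVertical σ),
    ((Equiv.Perm.sign σ : ℤ) : ℂ) • MonoidAlgebra.of ℂ (Equiv.Perm (Fin n)) σ

end SYT

/-- The hook length of the box `c` of the Young diagram `μ`: the number of boxes to its
right in its row, plus the number of boxes below it in its column, plus one. -/
def hookLength (μ : YoungDiagram) (c : ℕ × ℕ) : ℕ :=
  (μ.rowLen c.1 - (c.2 + 1)) + (μ.colLen c.2 - (c.1 + 1)) + 1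

/-- `H(T)`: the product of the hook lengths of the boxes of the Young diagram `μ`. -/
def hookProd (μ : YoungDiagram) : ℕ :=
  ∏ c ∈ μ.cells, hookLength μ c

/-- The Young operator `Y_T = (1/H(T)) · s_T · a_T ∈ ℂ[S_n]`. -/
noncomputable def youngOp {n : ℕ} (T : SYT n) : MonoidAlgebra ℂ (Equiv.Perm (Fin n)) :=
  ((hookProd T.shape : ℂ))⁻¹ • (T.rowSym * T.colAntisym)

/-- `f_T(N) = ∏_{(j,k)} (N + k − j)`, the product running over the boxes of the Young
diagram `μ` in row `j` and column `k` (here boxes `c = (c.1, c.2)` are 0-indexed,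
with `c.1` the row and `c.2` the column, so the content `k - j` is `c.2 - c.1`). -/
noncomputable def fPoly (μ : YoungDiagram) (N : ℕ) : ℂ :=
  ∏ c ∈ μ.cells, ((N : ℂ) + (c.2 : ℂ) - (c.1 : ℂ))

namespace SYT

/-- The box of `T ∈ SYT_n` containing the largest entry `n`. -/
def maxCell {n : ℕ} (T : SYT n) : ℕ × ℕ :=
  (T.shape.cells.filter fun c => T.entry c = n).sup id

lemma filter_maxCell {n : ℕ} (T : SYT (n + 1)) :
    ∃ c, (T.shape.cells.filter fun d => T.entry d = n + 1) = {c} := by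
  obtain ⟨c, hc, hce⟩ :=
    T.bijOn.surjOn (show (n + 1 : ℕ) ∈ Set.Icc 1 (n + 1) by simp)
  refine ⟨c, ?_⟩
  ext d
  simp only [Finset.mem_filter, Finset.mem_singleton]
  constructor
  · rintro ⟨hd, hde⟩
    exact T.bijOn.injOn (Finset.mem_coe.mpr hd) hc (by rw [hde, hce])
  · rintro rfl
    exact ⟨Finset.mem_coe.mp hc, hce⟩

lemma maxCell_spec {n : ℕ} (T : SYT (n + 1)) :
    T.maxCell ∈ T.shape.cells ∧ T.entry T.maxCell = n + 1 := by
  obtain ⟨c, hfc⟩ := filter_maxCell T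
  have hc : c ∈ T.shape.cells.filter fun d => T.entry d = n + 1 := by
    rw [hfc]; exact Finset.mem_singleton_self c
  rw [Finset.mem_filter] at hc
  have hmc : T.maxCell = c := by
    unfold maxCell
    rw [hfc, Finset.sup_singleton]
    rfl
  rw [hmc]
  exact hc

/-- Entries of a standard Young tableau increase strictly in the partial order on boxes. -/
lemma entry_strict_mono {n : ℕ} (T : SYT n) {c d : ℕ × ℕ} (hd : d ∈ T.shape.cells)
    (hle : c ≤ d) (hne : c ≠ d) : T.entry c < T.entry d := by
  obtain ⟨a, b⟩ := c; obtain ⟨x, y⟩ := d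
  rw [Prod.mk_le_mk] at hle
  obtain ⟨hax, hby⟩ := hle
  rcases Nat.lt_or_ge a x with h | h
  · have hxb : (x, b) ∈ T.shape.cells :=
      T.shape.isLowerSet (by rw [Prod.mk_le_mk]; exact ⟨le_refl x, hby⟩) hd
    have h1 : T.entry (a, b) < T.entry (x, b) := T.col_lt a x b h hxb
    rcases Nat.lt_or_ge b y with h2 | h2
    · exact h1.trans (T.row_lt x b y h2 hd)
    · have : b = y := le_antisymm hby h2
      subst this; exact h1
  · have hax' : a = x := le_antisymm hax h
    subst hax'
    rcases Nat.lt_or_ge b y with h2 | h2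
    · exact T.row_lt a b y h2 hd
    · have : b = y := le_antisymm hby h2
      subst this
      exact absurd rfl hne

lemma isLowerSet_erase_maxCell {n : ℕ} (T : SYT (n + 1)) :
    IsLowerSet ((T.shape.cells.erase T.maxCell : Finset (ℕ × ℕ)) : Set (ℕ × ℕ)) := by
  intro a b hba ha
  simp only [Finset.coe_erase, Set.mem_diff, Finset.mem_coe, Set.mem_singleton_iff] at ha ⊢
  obtain ⟨hac, hane⟩ := ha
  refine ⟨T.shape.isLowerSet hba hac, ?_⟩
  rintro rfl
  have hlt := entry_strict_mono T hac hba (Ne.symm hane)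
  have h1 := (maxCell_spec T).2
  have h2 := T.bijOn.mapsTo (Finset.mem_coe.mpr hac)
  simp only [Set.mem_Icc] at h2
  omega

/-- `T' ∈ SYT_n`: the standard Young tableau obtained from `T ∈ SYT_{n+1}` by deleting
the box containing the highest number `n + 1`. -/
def restrict {n : ℕ} (T : SYT (n + 1)) : SYT n where
  shape := ⟨T.shape.cells.erase T.maxCell, isLowerSet_erase_maxCell T⟩
  entry := fun c => if c = T.maxCell then 0 else T.entry c
  zero_outside := by
    intro c hc
    have hc' : c ∉ T.shape.cells.erase T.maxCell := hc
    rcases eq_or_ne c T.maxCell with h | h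
    · simp [h]
    · have hnc : c ∉ T.shape.cells := fun hmem => hc' (Finset.mem_erase.mpr ⟨h, hmem⟩)
      simp [if_neg h, T.zero_outside c hnc]
  bijOn := by
    refine ⟨?_, ?_, ?_⟩
    · intro c hc
      have hc' : c ∈ T.shape.cells.erase T.maxCell := hc
      rw [Finset.mem_erase] at hc'
      obtain ⟨hne, hmem⟩ := hc'
      have h1 := T.bijOn.mapsTo (Finset.mem_coe.mpr hmem)
      simp only [Set.mem_Icc] at h1
      have h2 : T.entry c ≠ n + 1 := by
        intro h
        exact hne (T.bijOn.injOn (Finset.mem_coe.mpr hmem)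
          (Finset.mem_coe.mpr (maxCell_spec T).1) (by rw [h, (maxCell_spec T).2]))
      simp only [if_neg hne, Set.mem_Icc]
      omega
    · intro a ha b hb h
      have ha' : a ∈ T.shape.cells.erase T.maxCell := ha
      have hb' : b ∈ T.shape.cells.erase T.maxCell := hb
      rw [Finset.mem_erase] at ha' hb'
      simp only [if_neg ha'.1, if_neg hb'.1] at h
      exact T.bijOn.injOn (Finset.mem_coe.mpr ha'.2) (Finset.mem_coe.mpr hb'.2) h
    · intro m hm
      simp only [Set.mem_Icc] at hm
      obtain ⟨c, hc, hce⟩ := T.bijOn.surjOn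
        (show m ∈ Set.Icc 1 (n + 1) by simp only [Set.mem_Icc]; omega)
      have hne : c ≠ T.maxCell := by
        intro h
        rw [h, (maxCell_spec T).2] at hce
        omega
      refine ⟨c, ?_, ?_⟩
      · exact Finset.mem_coe.mpr (Finset.mem_erase.mpr ⟨hne, Finset.mem_coe.mp hc⟩)
      · simp only [if_neg hne]
        exact hce
  row_lt := by
    intro i j₁ j₂ hj hmem
    have hmem' : (i, j₂) ∈ T.shape.cells.erase T.maxCell := hmem
    rw [Finset.mem_erase] at hmem'
    obtain ⟨hne₂, hmem₂⟩ := hmem'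
    have h1 := T.bijOn.mapsTo (Finset.mem_coe.mpr hmem₂)
    simp only [Set.mem_Icc] at h1
    rcases eq_or_ne (i, j₁) T.maxCell with h | h
    · simp only [if_pos h, if_neg hne₂]
      omega
    · simp only [if_neg h, if_neg hne₂]
      exact T.row_lt i j₁ j₂ hj hmem₂
  col_lt := by
    intro i₁ i₂ j hi hmem
    have hmem' : (i₂, j) ∈ T.shape.cells.erase T.maxCell := hmem
    rw [Finset.mem_erase] at hmem'
    obtain ⟨hne₂, hmem₂⟩ := hmem'
    have h1 := T.bijOn.mapsTo (Finset.mem_coe.mpr hmem₂)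
    simp only [Set.mem_Icc] at h1
    rcases eq_or_ne (i₁, j) T.maxCell with h | h
    · simp only [if_pos h, if_neg hne₂]
      omega
    · simp only [if_neg h, if_neg hne₂]
      exact T.col_lt i₁ i₂ j hi hmem₂

end SYT

/-- The algebra embedding `ℂ[S_m] → ℂ[S_n]` (for `m ≤ n`) induced by the inclusion
`S_m ↪ S_n` acting on the first `m` letters and fixing the remaining ones. -/
noncomputable def iotaLE (m n : ℕ) (h : m ≤ n) :
    MonoidAlgebra ℂ (Equiv.Perm (Fin m)) →ₐ[ℂ] MonoidAlgebra ℂ (Equiv.Perm (Fin n)) :=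
  MonoidAlgebra.mapDomainAlgHom ℂ ℂ (Equiv.Perm.viaEmbeddingHom (Fin.castLEEmb h))

/-- The algebra embedding `ι : ℂ[S_n] → ℂ[S_{n+1}]` induced by the inclusion
`S_n ↪ S_{n+1}` fixing the last letter `n + 1`. -/
noncomputable def iota (n : ℕ) :
    MonoidAlgebra ℂ (Equiv.Perm (Fin n)) →ₐ[ℂ] MonoidAlgebra ℂ (Equiv.Perm (Fin (n + 1))) :=
  iotaLE n (n + 1) (Nat.le_succ n)

/-- The Hermitian Young operator `Θ_T ∈ ℂ[S_n]`, defined recursively by `Θ_T = Y_T` for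
`n ≤ 2` and `Θ_T = ι(Θ_{T'}) · Y_T · ι(Θ_{T'})` for `n ≥ 3`, where `T' ∈ SYT_{n-1}` is
obtained from `T` by deleting the box containing `n`. -/
noncomputable def theta : (n : ℕ) → SYT n → MonoidAlgebra ℂ (Equiv.Perm (Fin n))
  | 0, T => youngOp T
  | 1, T => youngOp T
  | 2, T => youngOp T
  | (n + 3), T =>
      iota (n + 2) (theta (n + 2) T.restrict) * youngOp T *
        iota (n + 2) (theta (n + 2) T.restrict)

/-- The Young diagram of shape `(3,2)`: rows of lengths 3 and 2 (cells are 0-indexed,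
`(i, j)` meaning row `i`, column `j`). -/
def shape32 : YoungDiagram :=
  ⟨{(0, 0), (0, 1), (0, 2), (1, 0), (1, 1)}, by
    rintro ⟨a, b⟩ ⟨c, d⟩ hle hmem
    rw [Prod.mk_le_mk] at hle
    simp only [Finset.coe_insert, Set.mem_insert_iff, Finset.coe_singleton,
      Set.mem_singleton_iff, Prod.mk.injEq] at hmem ⊢
    omega⟩

lemma mem_shape32 (c : ℕ × ℕ) : c ∈ shape32.cells ↔ c.1 ≤ 1 ∧ c.1 + c.2 ≤ 2 := by
  rcases c with ⟨a, b⟩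
  simp only [shape32, Finset.mem_insert, Finset.mem_singleton, Prod.mk.injEq]
  omega

/-- Entry function of `T₁`: `1 2 3` in the first row, `4 5` in the second row. -/
def entryT₁ (c : ℕ × ℕ) : ℕ :=
  if c.1 ≤ 1 ∧ c.1 + c.2 ≤ 2 then 3 * c.1 + c.2 + 1 else 0

/-- Entry function of `T₂`: `1 3 5` in the first row, `2 4` in the second row. -/
def entryT₂ (c : ℕ × ℕ) : ℕ :=
  if c.1 ≤ 1 ∧ c.1 + c.2 ≤ 2 then 2 * c.2 + c.1 + 1 else 0

/-- The standard Young tableau of shape `(3,2)` with first row `{1,2,3}` and second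
row `{4,5}`. -/
def T₁ : SYT 5 where
  shape := shape32
  entry := entryT₁
  zero_outside := by
    intro c hc
    rw [mem_shape32] at hc
    simp only [entryT₁, if_neg hc]
  bijOn := by
    refine ⟨?_, ?_, ?_⟩
    · intro c hc
      simp only [Finset.mem_coe, mem_shape32] at hc
      simp only [entryT₁, if_pos hc, Set.mem_Icc]
      omega
    · rintro ⟨a₁, a₂⟩ ha ⟨b₁, b₂⟩ hb h
      simp only [Finset.mem_coe, mem_shape32] at ha hb
      simp only [entryT₁] at h
      split_ifs at h
      simp only [Prod.mk.injEq]
      omega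
    · intro m hm
      simp only [Set.mem_Icc] at hm
      refine ⟨((m - 1) / 3, (m - 1) % 3), ?_, ?_⟩
      · simp only [Finset.mem_coe, mem_shape32]; omega
      · simp only [entryT₁]; split_ifs <;> omega
  row_lt := by
    intro i j₁ j₂ hj hmem
    rw [mem_shape32] at hmem
    simp only [entryT₁]
    split_ifs <;> omega
  col_lt := by
    intro i₁ i₂ j hi hmem
    rw [mem_shape32] at hmem
    simp only [entryT₁]
    split_ifs <;> omega

/-- The standard Young tableau of shape `(3,2)` with first row `{1,3,5}` and second
row `{2,4}`. -/
def T₂ : SYT 5 where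
  shape := shape32
  entry := entryT₂
  zero_outside := by
    intro c hc
    rw [mem_shape32] at hc
    simp only [entryT₂, if_neg hc]
  bijOn := by
    refine ⟨?_, ?_, ?_⟩
    · intro c hc
      simp only [Finset.mem_coe, mem_shape32] at hc
      simp only [entryT₂, if_pos hc, Set.mem_Icc]
      omega
    · rintro ⟨a₁, a₂⟩ ha ⟨b₁, b₂⟩ hb h
      simp only [Finset.mem_coe, mem_shape32] at ha hb
      simp only [entryT₂] at h
      split_ifs at h
      simp only [Prod.mk.injEq]
      omega
    · intro m hm
      simp only [Set.mem_Icc] at hm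
      refine ⟨((m - 1) % 2, (m - 1) / 2), ?_, ?_⟩
      · simp only [Finset.mem_coe, mem_shape32]; omega
      · simp only [entryT₂]; split_ifs <;> omega
  row_lt := by
    intro i j₁ j₂ hj hmem
    rw [mem_shape32] at hmem
    simp only [entryT₂]
    split_ifs <;> omega
  col_lt := by
    intro i₁ i₂ j hi hmem
    rw [mem_shape32] at hmem
    simp only [entryT₂]
    split_ifs <;> omega

/-- The single-row Young diagram with 3 boxes. -/
def shapeRow3 : YoungDiagram :=
  ⟨{(0, 0), (0, 1), (0, 2)}, by
    rintro ⟨a, b⟩ ⟨c, d⟩ hle hmem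
    rw [Prod.mk_le_mk] at hle
    simp only [Finset.coe_insert, Set.mem_insert_iff, Finset.coe_singleton,
      Set.mem_singleton_iff, Prod.mk.injEq] at hmem ⊢
    omega⟩

lemma mem_shapeRow3 (c : ℕ × ℕ) : c ∈ shapeRow3.cells ↔ c.1 = 0 ∧ c.2 ≤ 2 := by
  rcases c with ⟨a, b⟩
  simp only [shapeRow3, Finset.mem_insert, Finset.mem_singleton, Prod.mk.injEq]
  omega

/-- The single-row standard Young tableau with entries `1, 2, 3`. -/
def rowTab3 : SYT 3 where
  shape := shapeRow3
  entry := fun c => if c.1 = 0 ∧ c.2 ≤ 2 then c.2 + 1 else 0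
  zero_outside := by
    intro c hc
    rw [mem_shapeRow3] at hc
    simp only [if_neg hc]
  bijOn := by
    refine ⟨?_, ?_, ?_⟩
    · intro c hc
      simp only [Finset.mem_coe, mem_shapeRow3] at hc
      simp only [if_pos hc, Set.mem_Icc]
      omega
    · rintro ⟨a₁, a₂⟩ ha ⟨b₁, b₂⟩ hb h
      simp only [Finset.mem_coe, mem_shapeRow3] at ha hb
      simp only at h
      split_ifs at h
      simp only [Prod.mk.injEq]
      omega
    · intro m hm
      simp only [Set.mem_Icc] at hm
      refine ⟨(0, m - 1), ?_, ?_⟩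
      · simp only [Finset.mem_coe, mem_shapeRow3, true_and]
        omega
      · simp only [true_and]
        split_ifs <;> omega
  row_lt := by
    intro i j₁ j₂ hj hmem
    rw [mem_shapeRow3] at hmem
    simp only
    split_ifs <;> omega
  col_lt := by
    intro i₁ i₂ j hi hmem
    rw [mem_shapeRow3] at hmem
    simp only
    split_ifs <;> omega

open Equiv Finset MonoidAlgebra
open scoped Nat

section GroupAlgebra

variable (k : Type*) {G G' : Type*} [Group G] [Fintype G] [Group G'] [Fintype G']

noncomputable def subgroupSum [CommSemiring k] (H : Subgroup G) : MonoidAlgebra k G :=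
  ∑ g ∈ univ.filter (· ∈ H), of k G g

variable {k} [CommRing k] {H K : Subgroup G}

lemma of_mul_subgroupSum {g : G} (hg : g ∈ H) : of k G g * subgroupSum k H = subgroupSum k H := by
  rw [subgroupSum, mul_sum]
  simp_rw [← map_mul]
  exact sum_equiv (Equiv.mulLeft g) (by simp [H.mul_mem_cancel_left hg]) (fun _ _ => rfl)

lemma subgroupSum_mul_of {g : G} (hg : g ∈ H) : subgroupSum k H * of k G g = subgroupSum k H := by
  rw [subgroupSum, sum_mul]
  simp_rw [← map_mul]
  exact sum_equiv (Equiv.mulRight g) (by simp [H.mul_mem_cancel_right hg]) (fun _ _ => rfl)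

lemma subgroupSum_mul_eq_card_smul {x : MonoidAlgebra k G} (hx : ∀ h ∈ H, of k G h * x = x) :
    subgroupSum k H * x = (Nat.card H : k) • x := by
  rw [subgroupSum, sum_mul, sum_congr rfl fun h hh => hx h (mem_filter.mp hh).2, sum_const,
    Nat.cast_smul_eq_nsmul, Nat.card_eq_fintype_card, Fintype.card_subtype]

lemma mul_subgroupSum_eq_card_smul {x : MonoidAlgebra k G} (hx : ∀ h ∈ H, x * of k G h = x) :
    x * subgroupSum k H = (Nat.card H : k) • x := by
  rw [subgroupSum, mul_sum, sum_congr rfl fun h hh => hx h (mem_filter.mp hh).2, sum_const,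
    Nat.cast_smul_eq_nsmul, Nat.card_eq_fintype_card, Fintype.card_subtype]

lemma subgroupSum_mul_subgroupSum_of_le (hHK : H ≤ K) :
    subgroupSum k H * subgroupSum k K = (Nat.card H : k) • subgroupSum k K :=
  subgroupSum_mul_eq_card_smul fun _ hh => of_mul_subgroupSum (hHK hh)

lemma subgroupSum_mul_subgroupSum_of_le' (hHK : H ≤ K) :
    subgroupSum k K * subgroupSum k H = (Nat.card H : k) • subgroupSum k K :=
  mul_subgroupSum_eq_card_smul fun _ hh => subgroupSum_mul_of (hHK hh)

lemma subgroupSum_mul_of_conj_mul {h : G} (hh : h ∈ H) (g : G) {x : MonoidAlgebra k G}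
    (hx : of k G h⁻¹ * x = x) :
    subgroupSum k H * of k G (h * g * h⁻¹) * x = subgroupSum k H * of k G g * x := by
  rw [map_mul, map_mul, ← mul_assoc, ← mul_assoc, subgroupSum_mul_of hh, mul_assoc _ _ x, hx]

lemma mapDomainAlgHom_subgroupSum (f : G →* G') (hf : Function.Injective f) :
    MonoidAlgebra.mapDomainAlgHom k k f (subgroupSum k H) = subgroupSum k (H.map f) := by
  have himage : univ.filter (· ∈ H.map f) = (univ.filter (· ∈ H)).image f := by
    ext; simp [Subgroup.mem_map]
  rw [subgroupSum, subgroupSum, map_sum, himage, sum_image hf.injOn]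
  refine sum_congr rfl fun g _ => ?_
  simp [MonoidAlgebra.of_apply, MonoidAlgebra.mapDomainAlgHom_apply]

end GroupAlgebra

lemma of_mul_one_sub_of_eq_neg {k G : Type*} [CommRing k] [Group G] {τ : G} (hτ : τ * τ = 1) :
    of k G τ * (1 - of k G τ) = -(1 - of k G τ) := by
  rw [mul_sub, mul_one, ← map_mul, hτ, map_one, neg_sub]

lemma subgroupSum_mul_of_mul_eq_zero {k G : Type*} [Field k] [NeZero (2 : k)] [Group G] [Fintype G]
    {H : Subgroup G} {σ τ : G} (hτ : σ * τ * σ⁻¹ ∈ H) {a : MonoidAlgebra k G}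
    (ha : of k G τ * a = -a) :
    subgroupSum k H * of k G σ * a = 0 := by
  have h : subgroupSum k H * of k G σ * a = -(subgroupSum k H * of k G σ * a) := by
    calc subgroupSum k H * of k G σ * a
        = subgroupSum k H * of k G (σ * τ * σ⁻¹) * of k G σ * a := by rw [subgroupSum_mul_of hτ]
      _ = subgroupSum k H * of k G σ * (of k G τ * a) := by
        have hσ : of k G σ⁻¹ * (of k G σ * a) = a := by
          rw [← mul_assoc, ← map_mul, inv_mul_cancel, map_one, one_mul]
        simp only [map_mul, mul_assoc, hσ]
      _ = _ := by rw [ha, mul_neg]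
  rw [eq_neg_iff_add_eq_zero, ← two_smul k, smul_eq_zero] at h
  exact h.resolve_left two_ne_zero

namespace Equiv.Perm

variable {α β γ : Type*}

lemma viaEmbeddingHom_swap [DecidableEq α] [DecidableEq β] (ι : α ↪ β) (a b : α) :
    viaEmbeddingHom ι (swap a b) = swap (ι a) (ι b) := by
  ext x
  by_cases hx : x ∈ Set.range ι
  · obtain ⟨y, rfl⟩ := hx
    rw [viaEmbeddingHom_apply, viaEmbedding_apply, ι.injective.swap_apply]
  · have hxa : x ≠ ι a := fun h => hx ⟨a, h.symm⟩
    have hxb : x ≠ ι b := fun h => hx ⟨b, h.symm⟩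
    rw [viaEmbeddingHom_apply, viaEmbedding_apply_of_notMem _ _ _ hx,
      swap_apply_of_ne_of_ne hxa hxb]

lemma viaEmbeddingHom_comp (ι₁ : α ↪ β) (ι₂ : β ↪ γ) :
    (viaEmbeddingHom ι₂).comp (viaEmbeddingHom ι₁) = viaEmbeddingHom (ι₁.trans ι₂) := by
  ext e x
  simp only [MonoidHom.comp_apply, viaEmbeddingHom_apply]
  by_cases hx : x ∈ Set.range ι₂
  · obtain ⟨y, rfl⟩ := hx
    rw [viaEmbedding_apply]
    by_cases hy : y ∈ Set.range ι₁
    · obtain ⟨z, rfl⟩ := hy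
      rw [viaEmbedding_apply]
      exact (viaEmbedding_apply e (ι₁.trans ι₂) z).symm
    · rw [viaEmbedding_apply_of_notMem _ _ _ hy, viaEmbedding_apply_of_notMem]
      rintro ⟨z, hz⟩
      exact hy ⟨z, ι₂.injective hz⟩
  · rw [viaEmbedding_apply_of_notMem _ _ _ hx, viaEmbedding_apply_of_notMem]
    rintro ⟨z, rfl⟩
    exact hx ⟨ι₁ z, rfl⟩

lemma range_viaEmbeddingHom (ι : α ↪ β) :
    (viaEmbeddingHom ι).range = fixingSubgroup (Perm β) (Set.range ι)ᶜ := by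
  ext σ
  simp only [mem_fixingSubgroup_iff, Perm.smul_def, Set.mem_compl_iff]
  constructor
  · rintro ⟨e, rfl⟩ y hy
    exact viaEmbedding_apply_of_notMem _ _ _ hy
  · intro hσ
    have hrange : ∀ y, σ y ∈ Set.range ι ↔ y ∈ Set.range ι := by
      intro y
      by_cases hy : y ∈ Set.range ι
      · refine iff_of_true ?_ hy
        by_contra h
        exact h (by rwa [σ.injective (hσ _ h)])
      · rw [hσ y hy]
    let f := Equiv.ofInjective ι ι.injective
    refine ⟨f.trans ((σ.subtypePerm hrange).trans f.symm), ?_⟩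
    ext x
    by_cases hx : x ∈ Set.range ι
    · obtain ⟨y, rfl⟩ := hx
      rw [viaEmbeddingHom_apply, viaEmbedding_apply]
      simp [f, Equiv.apply_ofInjective_symm]
    · rw [viaEmbeddingHom_apply, viaEmbedding_apply_of_notMem _ _ _ hx, hσ x hx]

end Equiv.Perm

def permsBelow (m n : ℕ) : Subgroup (Perm (Fin n)) :=
  fixingSubgroup (Perm (Fin n)) {x : Fin n | m ≤ (x : ℕ)}

lemma mem_permsBelow {m n : ℕ} {σ : Perm (Fin n)} :
    σ ∈ permsBelow m n ↔ ∀ x : Fin n, m ≤ (x : ℕ) → σ x = x := by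
  simp only [permsBelow, mem_fixingSubgroup_iff, Perm.smul_def, Set.mem_ofPred_eq]

lemma range_viaEmbeddingHom_castLEEmb {m n : ℕ} (h : m ≤ n) :
    (Perm.viaEmbeddingHom (Fin.castLEEmb h)).range = permsBelow m n := by
  rw [Perm.range_viaEmbeddingHom, permsBelow, Fin.coe_castLEEmb, Fin.range_castLE]
  congr 1
  ext x
  simp

lemma card_permsBelow {m n : ℕ} (h : m ≤ n) : Nat.card (permsBelow m n) = m ! := by
  rw [← range_viaEmbeddingHom_castLEEmb h,
    ← Nat.card_congr (MonoidHom.ofInjective (Perm.viaEmbeddingHom_injective _)).toEquiv,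
    Nat.card_perm, Nat.card_eq_fintype_card, Fintype.card_fin]

lemma map_permsBelow {m n N : ℕ} (hmn : m ≤ n) (hnN : n ≤ N) :
    (permsBelow m n).map (Perm.viaEmbeddingHom (Fin.castLEEmb hnN)) = permsBelow m N := by
  rw [← range_viaEmbeddingHom_castLEEmb hmn, MonoidHom.map_range, Perm.viaEmbeddingHom_comp,
    ← range_viaEmbeddingHom_castLEEmb (hmn.trans hnN)]
  rfl

namespace SYT

def rowGroup {n : ℕ} (T : SYT n) : Subgroup (Perm (Fin n)) where
  carrier := {σ | T.IsHorizontal σ}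
  mul_mem' hσ hτ x := by rw [Perm.mul_apply, hσ, hτ]
  one_mem' _ := rfl
  inv_mem' {σ} hσ x := by simpa using (hσ (σ⁻¹ x)).symm

lemma rowSym_eq_subgroupSum {n : ℕ} (T : SYT n) : T.rowSym = subgroupSum ℂ T.rowGroup := rfl

end SYT

lemma youngOp_eq_of_single_row {n : ℕ} (T : SYT n) (hrow : ∀ x, T.rowOf x = 0)
    (hcol : ∀ x, T.colOf x = (x : ℕ)) (hhook : hookProd T.shape = n !) :
    youngOp T = (n ! : ℂ)⁻¹ • subgroupSum ℂ ⊤ := by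
  have hrowGroup : T.rowGroup = ⊤ := by
    ext σ
    simp only [Subgroup.mem_top, iff_true]
    intro x
    rw [hrow, hrow]
  have hvertical : univ.filter T.IsVertical = {1} := by
    ext σ
    simp only [mem_filter, mem_univ, true_and, mem_singleton, SYT.IsVertical, hcol]
    refine ⟨fun h => Perm.ext fun x => Fin.ext (h x), ?_⟩
    rintro rfl x
    rfl
  rw [youngOp, SYT.rowSym_eq_subgroupSum, hrowGroup, SYT.colAntisym, hvertical, sum_singleton,
    Perm.sign_one, hhook]
  simp [← MonoidAlgebra.one_def]

lemma iotaLE_subgroupSum {m n : ℕ} (h : m ≤ n) (H : Subgroup (Perm (Fin m))) :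
    iotaLE m n h (subgroupSum ℂ H) =
      subgroupSum ℂ (H.map (Perm.viaEmbeddingHom (Fin.castLEEmb h))) :=
  mapDomainAlgHom_subgroupSum _ (Perm.viaEmbeddingHom_injective _)

lemma iotaLE_subgroupSum_top {m n : ℕ} (h : m ≤ n) :
    iotaLE m n h (subgroupSum ℂ ⊤) = subgroupSum ℂ (permsBelow m n) := by
  rw [iotaLE_subgroupSum, ← MonoidHom.range_eq_map, range_viaEmbeddingHom_castLEEmb]

lemma iotaLE_of_swap {m n : ℕ} (h : m ≤ n) (a b : Fin m) :
    iotaLE m n h (of ℂ _ (swap a b)) = of ℂ _ (swap (Fin.castLE h a) (Fin.castLE h b)) := by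
  simp [iotaLE, MonoidAlgebra.of_apply, MonoidAlgebra.mapDomainAlgHom_apply,
    Perm.viaEmbeddingHom_swap]

lemma youngOp_T₁_restrict_restrict_restrict :
    youngOp T₁.restrict.restrict.restrict = (2 : ℂ)⁻¹ • subgroupSum ℂ ⊤ := by
  rw [youngOp_eq_of_single_row _ (by decide) (by decide)]
  · norm_num
  · simp only [hookProd, hookLength, YoungDiagram.rowLen_eq_card, YoungDiagram.colLen_eq_card]
    decide

lemma youngOp_T₁_restrict_restrict :
    youngOp T₁.restrict.restrict = (6 : ℂ)⁻¹ • subgroupSum ℂ ⊤ := by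
  rw [youngOp_eq_of_single_row _ (by decide) (by decide)]
  · norm_num
  · simp only [hookProd, hookLength, YoungDiagram.rowLen_eq_card, YoungDiagram.colLen_eq_card]
    decide

lemma youngOp_rowTab3 : youngOp rowTab3 = (6 : ℂ)⁻¹ • subgroupSum ℂ ⊤ := by
  rw [youngOp_eq_of_single_row _ (by decide) (by decide)]
  · norm_num
  · simp only [hookProd, hookLength, YoungDiagram.rowLen_eq_card, YoungDiagram.colLen_eq_card]
    decide

lemma theta_T₁_restrict_restrict :
    theta 3 T₁.restrict.restrict = (6 : ℂ)⁻¹ • subgroupSum ℂ ⊤ := by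
  show iota 2 (youngOp T₁.restrict.restrict.restrict) * youngOp T₁.restrict.restrict *
    iota 2 (youngOp T₁.restrict.restrict.restrict) = _
  rw [youngOp_T₁_restrict_restrict_restrict, youngOp_T₁_restrict_restrict, iota,
    map_smul, iotaLE_subgroupSum_top]
  simp only [smul_mul_assoc, mul_smul_comm, smul_smul,
    subgroupSum_mul_subgroupSum_of_le le_top, subgroupSum_mul_subgroupSum_of_le' le_top,
    card_permsBelow (show 2 ≤ 3 by norm_num)]
  norm_num

lemma rowGroup_T₁_restrict : T₁.restrict.rowGroup = permsBelow 3 4 := by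
  ext σ
  rw [mem_permsBelow]
  show T₁.restrict.IsHorizontal σ ↔ _
  unfold SYT.IsHorizontal
  revert σ
  decide

lemma colAntisym_T₁_restrict : T₁.restrict.colAntisym = 1 - of ℂ _ (swap 0 3) := by
  have hvertical : univ.filter T₁.restrict.IsVertical = {1, swap 0 3} := by
    ext σ
    simp only [mem_filter, mem_univ, true_and, mem_insert, mem_singleton, SYT.IsVertical]
    revert σ
    decide
  rw [SYT.colAntisym, hvertical, sum_pair (by decide), Perm.sign_one, Perm.sign_swap (by decide)]
  simp [sub_eq_add_neg, ← MonoidAlgebra.one_def]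

lemma youngOp_T₁_restrict :
    youngOp T₁.restrict =
      (8 : ℂ)⁻¹ • (subgroupSum ℂ (permsBelow 3 4) * (1 - of ℂ _ (swap 0 3))) := by
  have hhook : hookProd T₁.restrict.shape = 8 := by
    simp only [hookProd, hookLength, YoungDiagram.rowLen_eq_card, YoungDiagram.colLen_eq_card]
    decide
  rw [youngOp, hhook, SYT.rowSym_eq_subgroupSum, rowGroup_T₁_restrict, colAntisym_T₁_restrict]
  norm_num

section T₁

local notation "P₃" => subgroupSum ℂ (permsBelow 3 5)
local notation "P₄" => subgroupSum ℂ (permsBelow 4 5)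

lemma iota_theta_T₁_restrict :
    iota 4 (theta 4 T₁.restrict) = (48 : ℂ)⁻¹ • (P₃ * (1 - of ℂ _ (swap 0 3)) * P₃) := by
  have htheta : theta 4 T₁.restrict = (48 : ℂ)⁻¹ • (subgroupSum ℂ (permsBelow 3 4) *
      (1 - of ℂ _ (swap 0 3)) * subgroupSum ℂ (permsBelow 3 4)) := by
    show iota 3 (theta 3 T₁.restrict.restrict) * youngOp T₁.restrict *
      iota 3 (theta 3 T₁.restrict.restrict) = _
    rw [theta_T₁_restrict_restrict, youngOp_T₁_restrict, iota, map_smul, iotaLE_subgroupSum_top]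
    simp only [smul_mul_assoc, mul_smul_comm, smul_smul, ← mul_assoc,
      subgroupSum_mul_subgroupSum_of_le le_rfl, card_permsBelow (show 3 ≤ 4 by norm_num)]
    norm_num
  rw [htheta, map_smul, map_mul, map_mul, map_sub, map_one, iota, iotaLE_subgroupSum,
    map_permsBelow (show 3 ≤ 4 by norm_num), iotaLE_of_swap]
  rfl

set_option maxRecDepth 10000 in
lemma permsBelow_le_rowGroup_T₁ : permsBelow 3 5 ≤ T₁.rowGroup := by
  intro σ
  rw [mem_permsBelow]
  show _ → T₁.IsHorizontal σ
  unfold SYT.IsHorizontal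
  revert σ
  decide

set_option maxRecDepth 10000 in
lemma colAntisym_T₁ :
    T₁.colAntisym = (1 - of ℂ _ (swap 0 3)) * (1 - of ℂ _ (swap 1 4)) := by
  have hvertical : univ.filter T₁.IsVertical =
      {1, swap 0 3, swap 1 4, swap 0 3 * swap 1 4} := by
    ext σ
    simp only [mem_filter, mem_univ, true_and, mem_insert, mem_singleton, SYT.IsVertical]
    revert σ
    decide
  rw [SYT.colAntisym, hvertical, sum_insert (by decide), sum_insert (by decide),
    sum_pair (by decide), Perm.sign_one, Perm.sign_mul, Perm.sign_swap (by decide),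
    Perm.sign_swap (by decide)]
  simp only [Int.units_mul_self, Units.val_one, Units.val_neg, Int.cast_one,
    Int.cast_neg, one_smul, neg_smul, map_one, map_mul, mul_sub, sub_mul, one_mul, mul_one]
  abel

lemma youngOp_T₁ : youngOp T₁ = (24 : ℂ)⁻¹ • (subgroupSum ℂ T₁.rowGroup *
    ((1 - of ℂ _ (swap 0 3)) * (1 - of ℂ _ (swap 1 4)))) := by
  have hhook : hookProd T₁.shape = 24 := by
    simp only [hookProd, hookLength, YoungDiagram.rowLen_eq_card, YoungDiagram.colLen_eq_card]
    decide
  rw [youngOp, hhook, SYT.rowSym_eq_subgroupSum, colAntisym_T₁]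
  norm_num

lemma of_mul_youngOp_T₁ {g : Perm (Fin 5)} (hg : g ∈ permsBelow 3 5) :
    of ℂ _ g * youngOp T₁ = youngOp T₁ := by
  rw [youngOp_T₁, mul_smul_comm, ← mul_assoc, of_mul_subgroupSum (permsBelow_le_rowGroup_T₁ hg)]

lemma subgroupSum_mul_youngOp_T₁ : P₃ * youngOp T₁ = (6 : ℂ) • youngOp T₁ := by
  rw [subgroupSum_mul_eq_card_smul fun _ hh => of_mul_youngOp_T₁ hh,
    card_permsBelow (by norm_num)]
  norm_num

lemma swap_mem_permsBelow_four {a b : Fin 5} (ha : a ≠ 4) (hb : b ≠ 4) :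
    swap a b ∈ permsBelow 4 5 := by
  rw [mem_permsBelow]
  intro x hx
  obtain rfl : x = 4 := by omega
  exact swap_apply_of_ne_of_ne ha.symm hb.symm

lemma conj_swap_mem_permsBelow_four (σ : Perm (Fin 5)) :
    σ * swap 0 3 * σ⁻¹ ∈ permsBelow 4 5 ∨ σ * swap 1 4 * σ⁻¹ ∈ permsBelow 4 5 := by
  simp only [← swap_apply_apply]
  by_cases h : σ 0 = 4 ∨ σ 3 = 4
  · right
    have hne : ∀ x, x ≠ 0 → x ≠ 3 → σ x ≠ 4 := by
      rintro x hx0 hx3 hx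
      rcases h with h | h
      · exact hx0 (σ.injective (hx.trans h.symm))
      · exact hx3 (σ.injective (hx.trans h.symm))
    exact swap_mem_permsBelow_four (hne 1 (by decide) (by decide)) (hne 4 (by decide) (by decide))
  · rw [not_or] at h
    exact Or.inl (swap_mem_permsBelow_four h.1 h.2)

lemma colAntisym_T₁_factors_comm :
    (1 - of ℂ _ (swap (0 : Fin 5) 3)) * (1 - of ℂ _ (swap 1 4)) =
      (1 - of ℂ _ (swap (1 : Fin 5) 4)) * (1 - of ℂ _ (swap 0 3)) := by
  have hcomm : of ℂ _ (swap (0 : Fin 5) 3) * of ℂ _ (swap 1 4) =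
      of ℂ _ (swap (1 : Fin 5) 4) * of ℂ _ (swap 0 3) := by
    rw [← map_mul, ← map_mul, show swap (0 : Fin 5) 3 * swap 1 4 = swap 1 4 * swap 0 3 by decide]
  simp only [sub_mul, mul_sub, one_mul, mul_one, hcomm]
  abel

lemma subgroupSum_permsBelow_four_mul_youngOp_T₁ : P₄ * youngOp T₁ = 0 := by
  have hvanish : ∀ σ, P₄ * of ℂ _ σ * ((1 - of ℂ _ (swap 0 3)) * (1 - of ℂ _ (swap 1 4))) = 0 := by
    intro σ
    rcases conj_swap_mem_permsBelow_four σ with h | h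
    · refine subgroupSum_mul_of_mul_eq_zero h ?_
      rw [← mul_assoc, of_mul_one_sub_of_eq_neg (swap_mul_self _ _), neg_mul]
    · refine subgroupSum_mul_of_mul_eq_zero h ?_
      rw [colAntisym_T₁_factors_comm, ← mul_assoc, of_mul_one_sub_of_eq_neg (swap_mul_self _ _),
        neg_mul]
  rw [youngOp_T₁, mul_smul_comm, ← mul_assoc, ← SYT.rowSym_eq_subgroupSum, SYT.rowSym, mul_sum,
    sum_mul, sum_eq_zero fun σ _ => hvanish σ, smul_zero]

lemma youngOp_T₁_mul_subgroupSum_permsBelow_four : youngOp T₁ * P₄ = 0 := by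
  have hswap : swap (0 : Fin 5) 3 ∈ permsBelow 4 5 :=
    swap_mem_permsBelow_four (by decide) (by decide)
  have hfactor : (1 - of ℂ _ (swap (0 : Fin 5) 3)) * P₄ = 0 := by
    rw [sub_mul, one_mul, of_mul_subgroupSum hswap, sub_self]
  rw [youngOp_T₁, smul_mul_assoc, colAntisym_T₁_factors_comm, mul_assoc, mul_assoc, hfactor,
    mul_zero, mul_zero, smul_zero]

lemma filter_mem_permsBelow_four :
    univ.filter (· ∈ permsBelow 4 5) = (univ.filter (· ∈ permsBelow 3 5) ×ˢ
      ({3, 0, 1, 2} : Finset (Fin 5))).image fun p => p.1 * swap p.2 3 := by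
  simp only [mem_permsBelow]
  decide

lemma subgroupSum_permsBelow_four :
    P₄ = P₃ + P₃ * of ℂ _ (swap 0 3) + P₃ * of ℂ _ (swap 1 3) + P₃ * of ℂ _ (swap 2 3) := by
  have hinj : Set.InjOn (fun p : Perm (Fin 5) × Fin 5 => p.1 * swap p.2 3)
      (univ.filter (· ∈ permsBelow 3 5) ×ˢ ({3, 0, 1, 2} : Finset (Fin 5)) : Finset _) := by
    refine card_image_iff.mp ?_
    rw [← filter_mem_permsBelow_four]
    simp only [mem_permsBelow]
    decide
  rw [subgroupSum, filter_mem_permsBelow_four, sum_image hinj, sum_product_right]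
  simp only [map_mul, ← sum_mul]
  rw [sum_insert (by decide), sum_insert (by decide), sum_pair (by decide), swap_self,
    ← Perm.one_def, map_one, mul_one, add_assoc, add_assoc]
  rfl

lemma subgroupSum_permsBelow_four_mul {z : MonoidAlgebra ℂ (Perm (Fin 5))}
    (hz : ∀ h ∈ permsBelow 3 5, of ℂ _ h * z = z) :
    P₄ * z = (6 : ℂ) • z + (3 : ℂ) • (P₃ * of ℂ _ (swap 0 3) * z) := by
  have hP₃ : P₃ * z = (6 : ℂ) • z := by
    rw [subgroupSum_mul_eq_card_smul hz, card_permsBelow (by norm_num)]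
    norm_num
  have hconj : ∀ h ∈ permsBelow 3 5,
      P₃ * of ℂ _ (h * swap 0 3 * h⁻¹) * z = P₃ * of ℂ _ (swap 0 3) * z :=
    fun h hh => subgroupSum_mul_of_conj_mul hh _ (hz _ (inv_mem hh))
  have h₁ : swap (1 : Fin 5) 3 = swap 0 1 * swap 0 3 * (swap 0 1)⁻¹ := by decide
  have h₂ : swap (2 : Fin 5) 3 = swap 0 2 * swap 0 3 * (swap 0 2)⁻¹ := by decide
  have hmem₁ : swap (0 : Fin 5) 1 ∈ permsBelow 3 5 := mem_permsBelow.mpr (by decide)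
  have hmem₂ : swap (0 : Fin 5) 2 ∈ permsBelow 3 5 := mem_permsBelow.mpr (by decide)
  rw [subgroupSum_permsBelow_four, add_mul, add_mul, add_mul, hP₃, h₁, h₂, hconj _ hmem₁,
    hconj _ hmem₂]
  module

lemma subgroupSum_mul_of_mul_youngOp_T₁ :
    P₃ * of ℂ _ (swap 0 3) * youngOp T₁ = (-2 : ℂ) • youngOp T₁ := by
  have h := subgroupSum_permsBelow_four_mul fun _ hh => of_mul_youngOp_T₁ hh
  rw [subgroupSum_permsBelow_four_mul_youngOp_T₁] at h
  linear_combination (norm := module) (-(3 : ℂ)⁻¹) • h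

lemma youngOp_T₁_mul_subgroupSum_mul_of_mul_subgroupSum :
    youngOp T₁ * P₃ * of ℂ _ (swap 0 3) * P₃ = (-2 : ℂ) • (youngOp T₁ * P₃) := by
  have h := congrArg (youngOp T₁ * ·)
    (subgroupSum_permsBelow_four_mul fun _ hh => of_mul_subgroupSum (H := permsBelow 3 5) hh)
  simp only [← mul_assoc, youngOp_T₁_mul_subgroupSum_permsBelow_four, zero_mul, mul_add,
    mul_smul_comm] at h
  linear_combination (norm := module) (-(3 : ℂ)⁻¹) • h

lemma iota_theta_T₁_restrict_mul_youngOp_T₁ :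
    iota 4 (theta 4 T₁.restrict) * youngOp T₁ = youngOp T₁ := by
  rw [iota_theta_T₁_restrict, smul_mul_assoc, mul_assoc, subgroupSum_mul_youngOp_T₁, mul_smul_comm,
    mul_sub, mul_one, sub_mul, subgroupSum_mul_youngOp_T₁, subgroupSum_mul_of_mul_youngOp_T₁]
  module

lemma youngOp_T₁_mul_iota_theta_T₁_restrict :
    youngOp T₁ * iota 4 (theta 4 T₁.restrict) = (6 : ℂ)⁻¹ • (youngOp T₁ * P₃) := by
  rw [iota_theta_T₁_restrict, mul_smul_comm, mul_sub, mul_one, sub_mul, mul_sub, ← mul_assoc,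
    ← mul_assoc, ← mul_assoc, youngOp_T₁_mul_subgroupSum_mul_of_mul_subgroupSum, mul_assoc,
    subgroupSum_mul_subgroupSum_of_le le_rfl, card_permsBelow (by norm_num), mul_smul_comm,
    Nat.factorial]
  module

lemma iotaLE_youngOp_rowTab3 (h : 3 ≤ 5) : iotaLE 3 5 h (youngOp rowTab3) = (6 : ℂ)⁻¹ • P₃ := by
  rw [youngOp_rowTab3, map_smul, iotaLE_subgroupSum_top]

end T₁

/-- **Simplified construction of `Θ_{T₁}`.**  For the standard tableau `T₁` of shape
`(3,2)` with rows `{1,2,3}` and `{4,5}`, and the single-row tableau `S` with entries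
`1,2,3` (so that `Y_S` is the full symmetrizer on `{1,2,3}`), the Hermitian Young
operator satisfies `Θ_{T₁} = ι₃(Y_S) · Y_{T₁} · ι₃(Y_S)` in `ℂ[S₅]`, where
`ι₃ : ℂ[S₃] → ℂ[S₅]` is the embedding induced by the inclusion `S₃ ↪ S₅` fixing `4`
and `5`. -/
theorem theta_T₁_eq_symmetrizer_sandwich :
    theta 5 T₁ =
      iotaLE 3 5 (by norm_num) (youngOp rowTab3) * youngOp T₁ *
        iotaLE 3 5 (by norm_num) (youngOp rowTab3) := by
  have htheta : theta 5 T₁ =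
      iota 4 (theta 4 T₁.restrict) * youngOp T₁ * iota 4 (theta 4 T₁.restrict) := rfl
  rw [htheta, iota_theta_T₁_restrict_mul_youngOp_T₁, youngOp_T₁_mul_iota_theta_T₁_restrict,
    iotaLE_youngOp_rowTab3, smul_mul_assoc, subgroupSum_mul_youngOp_T₁, smul_mul_assoc,
    mul_smul_comm, smul_mul_assoc]
  module
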